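/- arXiv:2206.08411 — 2 statements merged into one kernel-verified Lean document; each statement's English description precedes it below -/
import Mathlib

section
/- Let T > 0 and let w : [0,T] → ℝ be continuous with w(0) ≥ 0. Define φ(t) := −min_{y ∈ [0,t]} min(w(y), 0) and ξ(t) := w(t) + φ(t). Then φ increases only when ξ is at the boundary 0: for all 0 ≤ s ≤ t ≤ T, if φ(s) < φ(t) then there exists y ∈ [s,t] with ξ(y) = 0. -/
/-- The reflection term of the explicit Skorokhod solution increases only when the
reflected path `ξ = w + φ` touches the boundary `0`. -/
theorem skorokhod_reflection_increases_only_at_boundary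
    (T : ℝ) (hT : 0 < T) (w : ℝ → ℝ)
    (hw : ContinuousOn w (Set.Icc 0 T)) (hw0 : 0 ≤ w 0)
    (φ ξ : ℝ → ℝ)
    (hφ : ∀ t, φ t = -sInf ((fun y => min (w y) 0) '' Set.Icc 0 t))
    (hξ : ∀ t, ξ t = w t + φ t) :
    ∀ s t : ℝ, 0 ≤ s → s ≤ t → t ≤ T → φ s < φ t →
      ∃ y ∈ Set.Icc s t, ξ y = 0 := by
  intro s t hs hst htT hφst
  set f : ℝ → ℝ := fun y => min (w y) 0 with hf
  have hst0 : (0:ℝ) ≤ t := hs.trans hst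
  have hcont : ContinuousOn f (Set.Icc 0 t) :=
    (hw.mono (Set.Icc_subset_Icc le_rfl htT)).inf continuousOn_const
  obtain ⟨y0, hy0mem, hy0min⟩ :=
    (isCompact_Icc).exists_isMinOn ⟨0, Set.left_mem_Icc.2 hst0⟩ hcont
  -- sInf over [0,t] equals f y0
  have hleast : IsLeast (f '' Set.Icc 0 t) (f y0) :=
    ⟨⟨y0, hy0mem, rfl⟩, fun x ⟨z, hz, hzx⟩ => hzx ▸ hy0min hz⟩
  have hInf_t : sInf (f '' Set.Icc 0 t) = f y0 := hleast.csInf_eq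
  -- lower bound for sub-intervals
  have hlb : ∀ u, u ≤ t → f y0 ∈ lowerBounds (f '' Set.Icc 0 u) := by
    intro u hu x ⟨z, hz, hzx⟩
    exact hzx ▸ hy0min (Set.Icc_subset_Icc le_rfl hu hz)
  have hbdd : ∀ u, u ≤ t → BddBelow (f '' Set.Icc 0 u) := fun u hu => ⟨f y0, hlb u hu⟩
  -- from φ s < φ t : f y0 < sInf over [0,s]
  have hkey : f y0 < sInf (f '' Set.Icc 0 s) := by
    have := hφst
    rw [hφ s, hφ t, hInf_t, neg_lt_neg_iff] at this
    exact this
  -- s < y0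
  have hsy0 : s ≤ y0 := by
    by_contra h
    push_neg at h
    have hy0s : y0 ∈ Set.Icc 0 s := ⟨hy0mem.1, h.le⟩
    exact absurd (csInf_le (hbdd s hst) ⟨y0, hy0s, rfl⟩) (not_le.2 hkey)
  -- f y0 < 0 hence w y0 < 0
  have hms0 : sInf (f '' Set.Icc 0 s) ≤ 0 := by
    have h0 : f 0 = 0 := by simp [hf, hw0]
    calc sInf (f '' Set.Icc 0 s) ≤ f 0 :=
          csInf_le (hbdd s hst) ⟨0, Set.left_mem_Icc.2 hs, rfl⟩
      _ = 0 := h0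
  have hwy0 : w y0 < 0 := by
    have : f y0 < 0 := lt_of_lt_of_le hkey hms0
    by_contra h
    push_neg at h
    simp [hf, min_eq_right h] at this
  have hfy0 : f y0 = w y0 := min_eq_left hwy0.le
  -- sInf over [0, y0] = f y0
  have hInf_y0 : sInf (f '' Set.Icc 0 y0) = f y0 := by
    apply le_antisymm
    · exact csInf_le (hbdd y0 hy0mem.2) ⟨y0, Set.right_mem_Icc.2 hy0mem.1, rfl⟩
    · exact le_csInf ⟨f 0, 0, Set.left_mem_Icc.2 hy0mem.1, rfl⟩ (hlb y0 hy0mem.2)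
  refine ⟨y0, ⟨hsy0, hy0mem.2⟩, ?_⟩
  rw [hξ y0, hφ y0, hInf_y0, hfy0]
  ring
end

section
/- Let T > 0, let μ be a finite Borel measure on [0,T], let a ≥ 0, and let u : [0,T] → ℝ be a continuous nonnegative function such that u(t) ≤ a + ∫_{[0,t)} u dμ for every t ∈ [0,T]. Then u(t) ≤ a · exp( μ([0,t)) ) for every t ∈ [0,T]. -/
/-!
Write `F t = μ [0, t)`. For `b > a`, `φ = b · exp ∘ F` is a strict supersolution,
`a + ∫_{[0,t)} φ dμ < φ t`, thanks to the chain-rule inequality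
`∫_{[0,t)} exp (F y) dμ(y) ≤ exp (F t) - 1`. By the layer-cake formula this reduces to the tail
bound `μ {y ∈ [0,t) | r < F y} ≤ F t - r`: the image of `μ|[0,t)` under `F` is dominated by
Lebesgue measure on `[0, F t]`. As `F` is left-continuous and nondecreasing, `φ` is lower
semicontinuous, so there is a first time at which the continuous `u` reaches `φ`, and there the
two integral inequalities contradict each other. Finally let `b ↓ a`.
-/

open MeasureTheory Set Filter Topology Real

theorem lt_of_le_add_setIntegral_of_add_setIntegral_lt {μ : Measure ℝ}
    [IsFiniteMeasureOnCompacts μ] {a b c : ℝ} {u φ : ℝ → ℝ} (hu : ContinuousOn u (Icc a b))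
    (hφ : LowerSemicontinuous φ) (hφi : ∀ t, IntegrableOn φ (Ico a t) μ)
    (hsub : ∀ t ∈ Icc a b, u t ≤ c + ∫ y in Ico a t, u y ∂μ)
    (hsuper : ∀ t ∈ Icc a b, c + ∫ y in Ico a t, φ y ∂μ < φ t) :
    ∀ t ∈ Icc a b, u t < φ t := by
  by_contra! h
  set S := Icc a b ∩ {t | φ t - u t ≤ 0}
  have hS : IsClosed S := by
    obtain ⟨v, hv, hSv⟩ := lowerSemicontinuousOn_iff_preimage_Iic.1
      ((hφ.lowerSemicontinuousOn _).add hu.neg.lowerSemicontinuousOn) 0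
    rw [show S = Icc a b ∩ v from hSv]
    exact isClosed_Icc.inter hv
  have hbdd : BddBelow S := ⟨a, fun t ht => ht.1.1⟩
  have ht₀ : sInf S ∈ S := hS.csInf_mem
    (let ⟨t, ht, htu⟩ := h; ⟨t, ht, sub_nonpos.2 htu⟩) hbdd
  have hIco : Ico a (sInf S) ⊆ Icc a b := fun y hy => ⟨hy.1, hy.2.le.trans ht₀.1.2⟩
  have hbelow : ∀ y ∈ Ico a (sInf S), u y ≤ φ y := fun y hy => by
    by_contra! hy'
    exact notMem_of_lt_csInf hy.2 hbdd ⟨hIco hy, sub_nonpos.2 hy'.le⟩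
  have := calc
    u (sInf S) ≤ c + ∫ y in Ico a (sInf S), u y ∂μ := hsub _ ht₀.1
    _ ≤ c + ∫ y in Ico a (sInf S), φ y ∂μ := add_le_add_right
      (setIntegral_mono_on ((hu.integrableOn_compact isCompact_Icc).mono_set hIco)
        (hφi _) measurableSet_Ico hbelow) c
    _ < φ (sInf S) := hsuper _ ht₀.1
  linarith [show φ (sInf S) - u (sInf S) ≤ 0 from ht₀.2]

theorem monotone_measureReal_Ico (μ : Measure ℝ) [IsFiniteMeasure μ] (a : ℝ) :
    Monotone fun t => μ.real (Ico a t) :=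
  fun _ _ h => measureReal_mono (Ico_subset_Ico_right h)

theorem lowerSemicontinuous_measureReal_Ico (μ : Measure ℝ) [IsFiniteMeasure μ] (a : ℝ) :
    LowerSemicontinuous fun t => μ.real (Ico a t) := by
  intro t y hy
  have hIco : Ico a t = ⋃ s : Iio t, Ico a (s : ℝ) := by
    ext x
    simp only [mem_Ico, mem_iUnion, Subtype.exists, mem_Iio, exists_prop]
    constructor
    · rintro ⟨hax, hxt⟩
      obtain ⟨s, hxs, hst⟩ := exists_between hxt
      exact ⟨s, hst, hax, hxs⟩
    · rintro ⟨s, hst, hax, hxs⟩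
      exact ⟨hax, hxs.trans hst⟩
  have hlim : Tendsto (fun s : Iio t => μ.real (Ico a s)) atTop (𝓝 (μ.real (Ico a t))) := by
    rw [hIco]
    exact (ENNReal.tendsto_toReal (measure_ne_top _ _)).comp
      (tendsto_measure_iUnion_atTop fun s s' h => Ico_subset_Ico_right h)
  obtain ⟨s, hs⟩ := (hlim.eventually (lt_mem_nhds hy)).exists
  filter_upwards [Ioi_mem_nhds s.2] with t' ht'
  exact hs.trans_le (monotone_measureReal_Ico μ a ht'.le)

theorem tendsto_measure_Ico_nhdsGT (μ : Measure ℝ) [IsFiniteMeasureOnCompacts μ] (a c : ℝ) :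
    Tendsto (fun s => μ (Ico a s)) (𝓝[>] c) (𝓝 (μ (Icc a c))) := by
  have hInter : ⋂ r > c, Ico a r = Icc a c := by
    ext y
    simp only [mem_iInter, mem_Ico, mem_Icc]
    refine ⟨fun h => ⟨(h (c + 1) (by linarith)).1, le_of_forall_gt fun r hr => (h r hr).2⟩,
      fun h r hr => ⟨h.1, h.2.trans_lt hr⟩⟩
  rw [← hInter]
  exact tendsto_measure_biInter_gt (fun r _ => nullMeasurableSet_Ico)
    (fun i j _ h => Ico_subset_Ico_right h)
    ⟨c + 1, by linarith, ((measure_mono Ico_subset_Icc_self).trans_lt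
      isCompact_Icc.measure_lt_top).ne⟩

theorem measure_setOf_lt_measureReal_Ico_inter_le (μ : Measure ℝ) [IsFiniteMeasure μ]
    (a t r : ℝ) :
    μ ({y | r < μ.real (Ico a y)} ∩ Ico a t) ≤ μ (Ico a t) - ENNReal.ofReal r := by
  set B := {y | r < μ.real (Ico a y)} ∩ Ico a t
  rcases B.eq_empty_or_nonempty with hB | ⟨b, hb⟩
  · simp [hB]
  have hBm : MeasurableSet B :=
    (monotone_measureReal_Ico μ a).measurable measurableSet_Ioi |>.inter measurableSet_Ico
  have hbdd : BddBelow B := ⟨a, fun y hy => hy.2.1⟩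
  suffices hr : ENNReal.ofReal r ≤ μ (Ico a t \ B) by
    refine ENNReal.le_sub_of_add_le_right ENNReal.ofReal_ne_top ?_
    calc μ B + ENNReal.ofReal r ≤ μ (Ico a t ∩ B) + μ (Ico a t \ B) := by
          rw [inter_eq_right.2 inter_subset_right]
          gcongr
      _ = μ (Ico a t) := measure_inter_add_sdiff _ hBm
  -- `Ico a t \ B` contains `Ico a (sInf B)`, and even `Icc a (sInf B)` when `sInf B ∉ B`.
  by_cases hc : sInf B ∈ B
  · calc ENNReal.ofReal r ≤ μ (Ico a (sInf B)) := ENNReal.ofReal_le_of_le_toReal hc.1.le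
      _ ≤ μ (Ico a t \ B) := measure_mono fun y hy =>
          ⟨⟨hy.1, hy.2.trans hc.2.2⟩, notMem_of_lt_csInf hy.2 hbdd⟩
  · have hright : ∀ s > sInf B, ENNReal.ofReal r ≤ μ (Ico a s) := fun s hs => by
      obtain ⟨b', hb', hb's⟩ := exists_lt_of_csInf_lt ⟨b, hb⟩ hs
      exact ENNReal.ofReal_le_of_le_toReal
        (hb'.1.le.trans (monotone_measureReal_Ico μ a hb's.le))
    calc ENNReal.ofReal r ≤ μ (Icc a (sInf B)) :=
          ge_of_tendsto (tendsto_measure_Ico_nhdsGT μ a _)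
            (eventually_nhdsWithin_of_forall hright)
      _ ≤ μ (Ico a t \ B) := measure_mono fun y hy => by
          refine ⟨⟨hy.1, hy.2.trans_lt ((csInf_le hbdd hb).trans_lt hb.2.2)⟩, ?_⟩
          rcases hy.2.lt_or_eq with hlt | rfl
          exacts [notMem_of_lt_csInf hlt hbdd, hc]

theorem lintegral_Ioi_ofReal_sub_mul_ofReal_exp {m : ℝ} (hm : 0 ≤ m) :
    ∫⁻ r in Ioi 0, ENNReal.ofReal (m - r) * ENNReal.ofReal (exp r) =
      ENNReal.ofReal (exp m - m - 1) := by
  have hcont : Continuous fun r => (m - r) * exp r := by fun_prop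
  have hFTC : ∫ r in (0)..m, (m - r) * exp r = exp m - m - 1 := by
    rw [intervalIntegral.integral_eq_sub_of_hasDerivAt
      (f := fun r => (m - r + 1) * exp r) (fun r _ =>
        ((((hasDerivAt_id r).const_sub m).add_const 1).mul (hasDerivAt_exp r)).congr_deriv
          (by simp only [id]; ring)) (hcont.intervalIntegrable _ _)]
    simp only [sub_self, zero_add, exp_zero, sub_zero, mul_one]
    ring
  have htail : ∫⁻ r in Ioi m, ENNReal.ofReal (m - r) * ENNReal.ofReal (exp r) = 0 :=
    setLIntegral_eq_zero measurableSet_Ioi fun r (hr : m < r) => by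
      simp [ENNReal.ofReal_eq_zero.2 (sub_nonpos.2 hr.le)]
  rw [← Ioc_union_Ioi_eq_Ioi hm, lintegral_union measurableSet_Ioi (Ioc_disjoint_Ioi le_rfl),
    htail, add_zero, ← hFTC, intervalIntegral.integral_of_le hm,
    ofReal_integral_eq_lintegral_ofReal (hcont.integrableOn_Icc.mono_set Ioc_subset_Icc_self)]
  · exact setLIntegral_congr_fun measurableSet_Ioc fun r _ =>
      (ENNReal.ofReal_mul' (exp_pos r).le).symm
  · filter_upwards [ae_restrict_mem measurableSet_Ioc] with r hr
    exact mul_nonneg (sub_nonneg.2 hr.2) (exp_pos r).le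

theorem lintegral_ofReal_exp_measureReal_Ico_sub_one_le (μ : Measure ℝ) [IsFiniteMeasure μ]
    (a t : ℝ) :
    ∫⁻ y in Ico a t, ENNReal.ofReal (exp (μ.real (Ico a y)) - 1) ∂μ ≤
      ENNReal.ofReal (exp (μ.real (Ico a t)) - μ.real (Ico a t) - 1) := by
  have hlayer := lintegral_comp_eq_lintegral_meas_lt_mul (μ.restrict (Ico a t))
    (f := fun y => μ.real (Ico a y)) (g := exp) (Eventually.of_forall fun _ => measureReal_nonneg)
    (monotone_measureReal_Ico μ a).measurable.aemeasurable
    (fun _ _ => continuous_exp.intervalIntegrable _ _)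
    (Eventually.of_forall fun r => (exp_pos r).le)
  simp only [integral_exp, exp_zero] at hlayer
  rw [hlayer, ← lintegral_Ioi_ofReal_sub_mul_ofReal_exp measureReal_nonneg]
  refine setLIntegral_mono' measurableSet_Ioi fun r (hr : 0 < r) => ?_
  rw [Measure.restrict_apply' measurableSet_Ico, ENNReal.ofReal_sub _ hr.le, ofReal_measureReal]
  gcongr
  exact measure_setOf_lt_measureReal_Ico_inter_le μ a t r

theorem integrableOn_exp_measureReal_Ico (μ : Measure ℝ) [IsFiniteMeasure μ] (a t : ℝ) :
    IntegrableOn (fun y => exp (μ.real (Ico a y))) (Ico a t) μ :=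
  ((exp_monotone.comp (monotone_measureReal_Ico μ a)).monotoneOn _).integrableOn_isCompact
    isCompact_Icc |>.mono_set Ico_subset_Icc_self

theorem setIntegral_exp_measureReal_Ico_le (μ : Measure ℝ) [IsFiniteMeasure μ] (a t : ℝ) :
    ∫ y in Ico a t, exp (μ.real (Ico a y)) ∂μ ≤ exp (μ.real (Ico a t)) - 1 := by
  have hint := integrableOn_exp_measureReal_Ico μ a t
  have hsub : ∫ y in Ico a t, (exp (μ.real (Ico a y)) - 1) ∂μ ≤
      exp (μ.real (Ico a t)) - μ.real (Ico a t) - 1 := by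
    rw [integral_eq_lintegral_of_nonneg_ae
      (Eventually.of_forall fun y => sub_nonneg.2 (one_le_exp measureReal_nonneg))
      (hint.sub (integrable_const 1)).aestronglyMeasurable]
    exact ENNReal.toReal_le_of_le_ofReal (by linarith [add_one_le_exp (μ.real (Ico a t))])
      (lintegral_ofReal_exp_measureReal_Ico_sub_one_le μ a t)
  rw [integral_sub hint (integrable_const 1), setIntegral_const, smul_eq_mul, mul_one] at hsub
  linarith

theorem gronwall_measure_general
    (T : ℝ) (μ : Measure ℝ) [IsFiniteMeasure μ]
    (a : ℝ) (ha : 0 ≤ a) (u : ℝ → ℝ)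
    (hu : ContinuousOn u (Set.Icc 0 T))
    (hbound : ∀ t ∈ Set.Icc 0 T, u t ≤ a + ∫ y in Set.Ico 0 t, u y ∂μ) :
    ∀ t ∈ Set.Icc 0 T, u t ≤ a * Real.exp ((μ (Set.Ico 0 t)).toReal) := by
  have hlt : ∀ b > a, ∀ t ∈ Icc 0 T, u t < b * exp (μ.real (Ico 0 t)) := by
    intro b hab
    have hb : 0 ≤ b := ha.trans hab.le
    refine lt_of_le_add_setIntegral_of_add_setIntegral_lt hu
      ((continuous_const.mul continuous_exp).comp_lowerSemicontinuous
        (lowerSemicontinuous_measureReal_Ico μ 0)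
        fun _ _ h => mul_le_mul_of_nonneg_left (exp_le_exp.2 h) hb)
      (fun t => (integrableOn_exp_measureReal_Ico μ 0 t).const_mul b) hbound fun t _ => ?_
    have := mul_le_mul_of_nonneg_left (setIntegral_exp_measureReal_Ico_le μ 0 t) hb
    rw [integral_const_mul]
    linarith
  intro t ht
  exact ge_of_tendsto
    (((continuous_mul_const _).tendsto a).mono_left (nhdsWithin_le_nhds (s := Ioi a)))
    (eventually_nhdsWithin_of_forall fun b hab => (hlt b hab t ht).le)

/-- Gronwall inequality with respect to a finite Borel measure `μ` on the time interval:
if `u(t) ≤ a + ∫_{[0,t)} u dμ` on `[0,T]`, then `u(t) ≤ a · exp(μ([0,t)))`. -/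
theorem gronwall_measure
    (T : ℝ) (hT : 0 < T) (μ : Measure ℝ) [IsFiniteMeasure μ]
    (a : ℝ) (ha : 0 ≤ a) (u : ℝ → ℝ)
    (hu : ContinuousOn u (Set.Icc 0 T))
    (hunonneg : ∀ t ∈ Set.Icc 0 T, 0 ≤ u t)
    (hbound : ∀ t ∈ Set.Icc 0 T, u t ≤ a + ∫ y in Set.Ico 0 t, u y ∂μ) :
    ∀ t ∈ Set.Icc 0 T, u t ≤ a * Real.exp ((μ (Set.Ico 0 t)).toReal) :=
  gronwall_measure_general T μ a ha u hu hbound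
end
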